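/- Let σ ∈ M₂ᵐ commute with the parity operator, P σ = σ P. Then for all finsets Ξ, Ω ⊆ Fin m with |Ξ| + |Ω| odd, Tr(σ f_Ξ† f_Ω) = 0. -/

import Mathlib

open Matrix Finset

noncomputable section

/-- Ordered product of a family over a finset, factors in increasing index order. -/
def oprod {R : Type*} [Monoid R] {m : ℕ} (x : Fin m → R) (I : Finset (Fin m)) : R :=
  ((I.sort (· ≤ ·)).map x).prod

/-- Complex matrices indexed by `Fin (2^m)`. -/
abbrev Mat (m : ℕ) := Matrix (Fin (2^m)) (Fin (2^m)) ℂ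

/-- The parity operator `P = ∏_j (1 - 2 f_jᴴ f_j)`. -/
def parity {m : ℕ} (f : Fin m → Mat m) : Mat m :=
  oprod (fun j => 1 - (2:ℂ) • ((f j)ᴴ * f j)) Finset.univ

namespace EvenStateAux

variable {m : ℕ}

/-- The local parity factor. -/
def gop (f : Fin m → Mat m) (j : Fin m) : Mat m := 1 - (2:ℂ) • ((f j)ᴴ * f j)

section CAR

variable (f : Fin m → Mat m)
  (hff : ∀ i j : Fin m, f i * f j + f j * f i = 0)
  (hffd : ∀ i j : Fin m, f i * (f j)ᴴ + (f j)ᴴ * f i = if i = j then 1 else 0)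

include hff in
lemma f_sq (i : Fin m) : f i * f i = 0 := by
  have h : (2:ℂ) • (f i * f i) = 0 := by rw [two_smul]; exact hff i i
  exact (smul_eq_zero.mp h).resolve_left (by norm_num)

include hff in
lemma hffdd (i j : Fin m) : (f i)ᴴ * (f j)ᴴ + (f j)ᴴ * (f i)ᴴ = 0 := by
  have := congrArg Matrix.conjTranspose (hff j i)
  simpa [conjTranspose_add, conjTranspose_mul] using this

include hffd in
lemma ffd_self (j : Fin m) : f j * (f j)ᴴ = 1 - (f j)ᴴ * f j := by
  have := hffd j j
  simp only [if_pos rfl, ↓reduceIte] at this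
  linear_combination (norm := noncomm_ring) this

include hff hffd in
lemma g_mul_f (i j : Fin m) :
    gop f j * f i = (if j = i then (-1:ℂ) else 1) • (f i * gop f j) := by
  unfold gop
  by_cases hij : j = i
  · subst hij
    rw [if_pos rfl]
    have e2 := ffd_self f hffd j
    linear_combination (norm := (noncomm_ring <;> match_scalars <;> norm_num))
      ((-2:ℂ) • e2) * f j
  · rw [if_neg hij]
    have e := hffd i j
    rw [if_neg (fun h => hij h.symm)] at e
    linear_combination (norm := (noncomm_ring <;> match_scalars <;> norm_num))
      ((-2:ℂ) • (f j)ᴴ) * (hff i j) + ((2:ℂ) • e) * f j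

include hff hffd in
lemma g_mul_fd (i j : Fin m) :
    gop f j * (f i)ᴴ = (if j = i then (-1:ℂ) else 1) • ((f i)ᴴ * gop f j) := by
  unfold gop
  by_cases hij : j = i
  · subst hij
    rw [if_pos rfl]
    have e2 := ffd_self f hffd j
    linear_combination (norm := (noncomm_ring <;> match_scalars <;> norm_num))
      ((-2:ℂ) • (f j)ᴴ) * e2
  · rw [if_neg hij]
    have e3 := hffd j i
    rw [if_neg hij] at e3
    have e4 := hffdd f hff i j
    linear_combination (norm := (noncomm_ring <;> match_scalars <;> norm_num))
      ((-2:ℂ) • (f j)ᴴ) * e3 + ((2:ℂ) • e4) * f j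

include hff hffd in
lemma g_sq (j : Fin m) : gop f j * gop f j = 1 := by
  unfold gop
  have e1 := f_sq f hff j
  have e2 := ffd_self f hffd j
  linear_combination (norm := (noncomm_ring <;> match_scalars <;> norm_num))
    ((4:ℂ) • (f j)ᴴ) * e2 * f j + ((-4:ℂ) • ((f j)ᴴ * (f j)ᴴ)) * e1

include hff hffd in
lemma g_commute {i j : Fin m} (hij : i ≠ j) : Commute (gop f i) (gop f j) := by
  have A := hffd i j; rw [if_neg hij] at A
  have B := hffd j i; rw [if_neg hij.symm] at B
  have C := hffdd f hff i j
  have D := hff i j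
  have hn : ((f i)ᴴ * f i) * ((f j)ᴴ * f j) = ((f j)ᴴ * f j) * ((f i)ᴴ * f i) := by
    linear_combination (norm := (noncomm_ring <;> match_scalars <;> norm_num))
      (f i)ᴴ * A * f j - C * (f i * f j) - (f j)ᴴ * B * f i + ((f j)ᴴ * (f i)ᴴ) * D
  unfold gop Commute SemiconjBy
  linear_combination (norm := (noncomm_ring <;> match_scalars <;> norm_num))
    ((4:ℂ) • (1:Mat m)) * hn

/-- moving an element through an ordered product of local parity factors -/
lemma gprod_mul (x : Mat m) (c : Fin m → ℂ)
    (h : ∀ j, gop f j * x = c j • (x * gop f j)) :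
    ∀ l : List (Fin m),
      (l.map (gop f)).prod * x = (l.map c).prod • (x * (l.map (gop f)).prod)
  | [] => by simp
  | a :: l => by
    rw [List.map_cons, List.prod_cons, List.map_cons, List.prod_cons, mul_assoc,
      gprod_mul x c h l, mul_smul_comm, ← mul_assoc, h a, smul_mul_assoc, smul_smul,
      mul_comm ((l.map c).prod) (c a), mul_assoc x]

include hff hffd in
lemma parity_mul_f (i : Fin m) : parity f * f i = -(f i * parity f) := by
  have key := gprod_mul f (f i) (fun j => if j = i then (-1:ℂ) else 1)
    (fun j => g_mul_f f hff hffd i j) (Finset.univ.sort (· ≤ ·))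
  have hc : ((Finset.univ.sort (· ≤ ·)).map (fun j => if j = i then (-1:ℂ) else 1)).prod
      = -1 := by
    rw [List.Perm.prod_eq (List.Perm.map _ (Finset.sort_perm_toList _ _)),
      Finset.prod_map_toList]
    simp
  have hp : parity f = ((Finset.univ.sort (· ≤ ·)).map (gop f)).prod := rfl
  rw [hp, key, hc, neg_one_smul]

include hff hffd in
lemma parity_mul_fd (i : Fin m) : parity f * (f i)ᴴ = -((f i)ᴴ * parity f) := by
  have key := gprod_mul f ((f i)ᴴ) (fun j => if j = i then (-1:ℂ) else 1)
    (fun j => g_mul_fd f hff hffd i j) (Finset.univ.sort (· ≤ ·))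
  have hc : ((Finset.univ.sort (· ≤ ·)).map (fun j => if j = i then (-1:ℂ) else 1)).prod
      = -1 := by
    rw [List.Perm.prod_eq (List.Perm.map _ (Finset.sort_perm_toList _ _)),
      Finset.prod_map_toList]
    simp
  have hp : parity f = ((Finset.univ.sort (· ≤ ·)).map (gop f)).prod := rfl
  rw [hp, key, hc, neg_one_smul]

/-- moving the parity operator through a list of anticommuting factors -/
lemma parity_mul_list (P : Mat m) :
    ∀ l : List (Mat m), (∀ x ∈ l, P * x = -(x * P)) →
      P * l.prod = (-1:ℂ)^l.length • (l.prod * P)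
  | [], _ => by simp
  | a :: l, h => by
    have ha := h a List.mem_cons_self
    have hl := parity_mul_list P l (fun x hx => h x (List.mem_cons_of_mem a hx))
    rw [List.prod_cons, List.length_cons, ← mul_assoc, ha, neg_mul, mul_assoc, hl,
      mul_smul_comm, pow_succ, mul_smul, neg_one_smul, smul_neg, mul_assoc]

include hff hffd in
lemma parity_sq : parity f * parity f = 1 := by
  have key : ∀ l : List (Fin m), l.Nodup →
      (l.map (gop f)).prod * (l.map (gop f)).prod = 1 := by
    intro l
    induction l with
    | nil => simp
    | cons a l ih =>
      intro hnd
      rcases List.nodup_cons.mp hnd with ⟨ha, hnd'⟩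
      have hcomm : Commute (gop f a) ((l.map (gop f)).prod) := by
        apply Commute.list_prod_right
        intro x hx
        rcases List.mem_map.mp hx with ⟨b, hb, rfl⟩
        exact g_commute f hff hffd (fun h => ha (h ▸ hb))
      simp only [List.map_cons, List.prod_cons]
      calc gop f a * (l.map (gop f)).prod * (gop f a * (l.map (gop f)).prod)
          = gop f a * ((l.map (gop f)).prod * gop f a) * (l.map (gop f)).prod := by
            noncomm_ring
        _ = gop f a * (gop f a * (l.map (gop f)).prod) * (l.map (gop f)).prod := by
            rw [hcomm.symm.eq]
        _ = (gop f a * gop f a) * ((l.map (gop f)).prod * (l.map (gop f)).prod) := by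
            noncomm_ring
        _ = 1 := by rw [g_sq f hff hffd, ih hnd', one_mul]
  exact key (Finset.univ.sort (· ≤ ·)) (Finset.sort_nodup _ _)

include hff hffd in
lemma parity_mul_oprod (Ω : Finset (Fin m)) :
    parity f * oprod f Ω = (-1:ℂ)^Ω.card • (oprod f Ω * parity f) := by
  have h := parity_mul_list (parity f) ((Ω.sort (· ≤ ·)).map f) (by
    intro x hx
    rcases List.mem_map.mp hx with ⟨j, _, rfl⟩
    exact parity_mul_f f hff hffd j)
  rw [oprod, h]
  congr 1
  rw [List.length_map, Finset.length_sort]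

include hff hffd in
lemma parity_mul_oprod_dag (Ξ : Finset (Fin m)) :
    parity f * (oprod f Ξ)ᴴ = (-1:ℂ)^Ξ.card • ((oprod f Ξ)ᴴ * parity f) := by
  have hlist : (oprod f Ξ)ᴴ
      = ((((Ξ.sort (· ≤ ·)).map f).map Matrix.conjTranspose).reverse).prod := by
    rw [oprod, Matrix.conjTranspose_list_prod]
  have h := parity_mul_list (parity f)
    ((((Ξ.sort (· ≤ ·)).map f).map Matrix.conjTranspose).reverse) (by
      intro x hx
      rw [List.mem_reverse] at hx
      rcases List.mem_map.mp hx with ⟨y, hy, rfl⟩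
      rcases List.mem_map.mp hy with ⟨j, _, rfl⟩
      exact parity_mul_fd f hff hffd j)
  rw [hlist, h]
  congr 1
  rw [List.length_reverse, List.length_map, List.length_map, Finset.length_sort]

end CAR

end EvenStateAux

open EvenStateAux in
/-- If `σ` commutes with the parity operator, then all odd environment correlation
tensors `Tr(σ f_Ξ† f_Ω)`, `|Ξ| + |Ω|` odd, vanish. -/
theorem even_state_odd_moments_vanish {m : ℕ} (f : Fin m → Mat m)
    (hff : ∀ i j : Fin m, f i * f j + f j * f i = 0)
    (hffd : ∀ i j : Fin m, f i * (f j)ᴴ + (f j)ᴴ * f i = if i = j then 1 else 0)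
    (σ : Mat m) (hσeven : parity f * σ = σ * parity f)
    (Ξ Ω : Finset (Fin m)) (hodd : (Ξ.card + Ω.card) % 2 = 1) :
    Matrix.trace (σ * (oprod f Ξ)ᴴ * oprod f Ω) = 0 := by
  have hPP : parity f * parity f = 1 := parity_sq f hff hffd
  have hpow : (-1:ℂ)^(Ξ.card + Ω.card) = -1 := by
    rw [← Nat.div_add_mod (Ξ.card + Ω.card) 2, hodd, pow_add, pow_mul]
    norm_num
  have hPA : parity f * ((oprod f Ξ)ᴴ * oprod f Ω)
      = -(((oprod f Ξ)ᴴ * oprod f Ω) * parity f) := by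
    rw [← mul_assoc, parity_mul_oprod_dag f hff hffd Ξ, smul_mul_assoc, mul_assoc,
      parity_mul_oprod f hff hffd Ω, mul_smul_comm, smul_smul, ← pow_add, hpow,
      neg_one_smul, ← mul_assoc]
  suffices h : ∀ A : Mat m, parity f * A = -(A * parity f) →
      Matrix.trace (σ * A) = 0 by
    rw [mul_assoc]; exact h _ hPA
  intro A hA
  set P := parity f with hPdef
  have e1 : σ * P * (P * A) = σ * A := by
    rw [mul_assoc σ P, ← mul_assoc P P A, hPP, one_mul]
  have hT : Matrix.trace (σ * A) = -Matrix.trace (σ * A) := by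
    calc Matrix.trace (σ * A) = Matrix.trace (σ * P * (P * A)) := by rw [e1]
      _ = Matrix.trace (σ * P * (-(A * P))) := by rw [hA]
      _ = -Matrix.trace ((σ * P) * (A * P)) := by rw [mul_neg, Matrix.trace_neg]
      _ = -Matrix.trace ((A * P) * (σ * P)) := by rw [Matrix.trace_mul_comm]
      _ = -Matrix.trace (A * ((P * σ) * P)) := by rw [mul_assoc A P, ← mul_assoc P σ P]
      _ = -Matrix.trace (A * (σ * (P * P))) := by rw [hσeven, mul_assoc]
      _ = -Matrix.trace (A * σ) := by rw [hPP, mul_one]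
      _ = -Matrix.trace (σ * A) := by rw [Matrix.trace_mul_comm]
  have h2 : (2:ℂ) * Matrix.trace (σ * A) = 0 := by linear_combination hT
  exact (mul_eq_zero.mp h2).resolve_left (by norm_num)

end
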